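/- arXiv:1812.10554 — 2 statements merged into one kernel-verified Lean document; each statement's English description precedes it below -/
import Mathlib

section
/- For a conjugacy class C in a finite p-group with H = ⟨C⟩ and S a proper subrack of C, the union S̄ of H-orbits of elements of S is also a proper subset of C. -/
/-!
Suppose `S̄ = C` and put `K = ⟨S⟩ ≤ H`. The `H`-conjugates of `K` contain `S̄ = C`, so their normal
closure in `H` is `H`. In the nilpotent group `H` every maximal subgroup is normal, so `K` lies in
no maximal subgroup, i.e. `K = H`. As `S` is finite and closed under conjugation by its own
elements, it is normalized by `⟨S⟩ = H`, hence `S = S̄ = C`.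
-/

/-- A subset of a conjugacy class `C` is a subrack if it is closed under
conjugation `a ▷ b = a b a⁻¹`. -/
def IsSubrackOf {G : Type*} [Group G] (S C : Set G) : Prop :=
  S ⊆ C ∧ ∀ a ∈ S, ∀ b ∈ S, a * b * a⁻¹ ∈ S

open Subgroup

theorem Group.IsNilpotent.eq_top_of_normalClosure_eq_top {N : Type*} [Group N] [Finite N]
    [Group.IsNilpotent N] {K : Subgroup N} (hK : normalClosure (K : Set N) = ⊤) : K = ⊤ := by
  by_contra hne
  obtain ⟨M, hM, hKM⟩ := (eq_top_or_exists_le_coatom K).resolve_left hne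
  have := normalizerCondition_of_isNilpotent.normal_of_coatom M hM
  exact hM.1 (top_le_iff.mp (hK ▸ normalClosure_le_normal hKM))

theorem Subgroup.closure_eq_of_subset_conjugates {G : Type*} [Group G] [Finite G] {S T : Set G}
    [Group.IsNilpotent (closure T)] (hS : S ⊆ closure T)
    (hT : T ⊆ {b | ∃ a ∈ S, ∃ h ∈ closure T, h * a * h⁻¹ = b}) :
    closure S = closure T := by
  suffices (closure S).subgroupOf (closure T) = ⊤ from
    le_antisymm (closure_le _ |>.2 hS) (subgroupOf_eq_top.mp this)
  refine Group.IsNilpotent.eq_top_of_normalClosure_eq_top ?_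
  rw [eq_top_iff, ← closure_closure_coe_preimage (k := T), closure_le]
  intro x hx
  obtain ⟨a, ha, h, hh, hx⟩ := hT hx
  have haK : (⟨a, hS ha⟩ : closure T) ∈ normalClosure ((closure S).subgroupOf (closure T)) :=
    subset_normalClosure (mem_subgroupOf.mpr (subset_closure ha))
  obtain rfl : x = ⟨h, hh⟩ * ⟨a, hS ha⟩ * (⟨h, hh⟩ : closure T)⁻¹ := Subtype.ext hx.symm
  exact normalClosure_normal.conj_mem _ haK _

theorem IsSubrackOf.closure_le_normalizer {G : Type*} [Group G] {S C : Set G} [Finite S]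
    (hS : IsSubrackOf S C) : closure S ≤ normalizer S :=
  (closure_le _).2 fun a ha => mem_normalizer_fintype (hS.2 a ha)

theorem orbit_closure_proper_general {p : ℕ} [Fact p.Prime]
    {G : Type*} [Group G] [Finite G] (hp : IsPGroup p G)
    (C : Set G)
    (H : Subgroup G) (hH : H = Subgroup.closure C)
    (S : Set G) (hS : IsSubrackOf S C) (hSC : S ≠ C) :
    {b : G | ∃ a ∈ S, ∃ h ∈ H, h * a * h⁻¹ = b} ≠ C := by
  subst hH
  intro hbar
  have := (hp.to_subgroup (closure C)).isNilpotent
  have hclosure : closure S = closure C :=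
    closure_eq_of_subset_conjugates (hS.1.trans subset_closure) hbar.ge
  refine hSC (hS.1.antisymm fun c hc => ?_)
  obtain ⟨a, ha, h, hh, rfl⟩ := hbar.ge hc
  exact (hS.closure_le_normalizer (hclosure ▸ hh) a).1 ha

/-- For a conjugacy class C in a finite p-group with H = ⟨C⟩ and S a proper
subrack of C, the union S̄ of H-orbits of elements of S is a proper subset of C. -/
theorem orbit_closure_proper {p : ℕ} [Fact p.Prime]
    {G : Type*} [Group G] [Finite G] (hp : IsPGroup p G) (g : G)
    (C : Set G) (hC : C = {x : G | IsConj g x}) (hC1 : 1 < Nat.card C)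
    (H : Subgroup G) (hH : H = Subgroup.closure C)
    (S : Set G) (hS : IsSubrackOf S C) (hSC : S ≠ C) :
    {b : G | ∃ a ∈ S, ∃ h ∈ H, h * a * h⁻¹ = b} ≠ C :=
  orbit_closure_proper_general hp C H hH S hS hSC
end

section
/- The image of the closure operator S ↦ S̄ on the poset of subracks of a conjugacy class C in a finite p-group is isomorphic, as a poset, to the Boolean lattice of subsets of the set of H-orbits of C, where H = ⟨C⟩. -/
/-! The `H`-orbits of `C` are nonempty and pairwise disjoint. Since `C ⊆ H`, every union of
`H`-orbits inside `C` is a subrack that the closure fixes, while the closure of any subset of `C`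
is the union of the orbits it meets. So the image of the closure consists of the unions of blocks
of a partition into nonempty blocks, and these are ordered like the subsets of the set of blocks. -/

namespace Set

variable {α : Type*} {P : Set (Set α)}

theorem sUnion_image_val_subset_iff (hne : ∀ O ∈ P, O.Nonempty) (hP : P.PairwiseDisjoint id)
    (𝒜 ℬ : Set P) : ⋃₀ (Subtype.val '' 𝒜) ⊆ ⋃₀ (Subtype.val '' ℬ) ↔ 𝒜 ⊆ ℬ := by
  refine ⟨fun h O hO => ?_, fun h => sUnion_mono (image_mono h)⟩
  obtain ⟨x, hx⟩ := hne O O.2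
  obtain ⟨_, ⟨O', hO', rfl⟩, hxO'⟩ := h ⟨O, mem_image_of_mem _ hO, hx⟩
  rwa [Subtype.ext (hP.elim_set O.2 O'.2 x hx hxO')]

def sUnionOrderEmbedding (hne : ∀ O ∈ P, O.Nonempty) (hP : P.PairwiseDisjoint id) :
    Set P ↪o Set α :=
  OrderEmbedding.ofMapLEIff (fun 𝒜 => ⋃₀ (Subtype.val '' 𝒜)) (sUnion_image_val_subset_iff hne hP)

theorem range_sUnionOrderEmbedding (hne : ∀ O ∈ P, O.Nonempty) (hP : P.PairwiseDisjoint id) :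
    range (sUnionOrderEmbedding hne hP) = {T | ∃ 𝒜 ⊆ P, T = ⋃₀ 𝒜} := by
  ext T
  constructor
  · rintro ⟨𝒜, rfl⟩
    exact ⟨_, by rintro _ ⟨O, -, rfl⟩; exact O.2, rfl⟩
  · rintro ⟨𝒜, h𝒜, rfl⟩
    rw [← Subtype.range_coe (s := P), subset_range_iff_exists_image_eq] at h𝒜
    obtain ⟨ℬ, rfl⟩ := h𝒜
    exact ⟨ℬ, rfl⟩

noncomputable def sUnionOrderIso (hne : ∀ O ∈ P, O.Nonempty) (hP : P.PairwiseDisjoint id) :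
    {T : Set α // ∃ 𝒜 ⊆ P, T = ⋃₀ 𝒜} ≃o Set P :=
  ((OrderEmbedding.orderIso (f := sUnionOrderEmbedding hne hP)).trans
    (OrderIso.setCongr _ _ (range_sUnionOrderEmbedding hne hP))).symm

end Set

open Set

section ConjOrbit

variable {G : Type*} [Group G] (H : Subgroup G)

def conjOrbit (a : G) : Set G := {b | ∃ h ∈ H, h * a * h⁻¹ = b}

variable {H}

theorem mem_conjOrbit_self (a : G) : a ∈ conjOrbit H a :=
  ⟨1, H.one_mem, by group⟩

theorem conjOrbit_eq_of_mem {a b : G} (hb : b ∈ conjOrbit H a) :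
    conjOrbit H b = conjOrbit H a := by
  obtain ⟨k, hk, rfl⟩ := hb
  ext c
  constructor
  · rintro ⟨h, hh, rfl⟩
    exact ⟨h * k, mul_mem hh hk, by group⟩
  · rintro ⟨h, hh, rfl⟩
    exact ⟨h * k⁻¹, mul_mem hh (inv_mem hk), by group⟩

theorem pairwiseDisjoint_range_conjOrbit : (range (conjOrbit H)).PairwiseDisjoint id := by
  rintro _ ⟨a, rfl⟩ _ ⟨b, rfl⟩ hab
  refine disjoint_left.mpr fun c hca hcb => hab ?_
  rw [← conjOrbit_eq_of_mem hca, conjOrbit_eq_of_mem hcb]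

theorem conjOrbit_subset {T : Set G} (hT : ∀ h ∈ H, ∀ b ∈ T, h * b * h⁻¹ ∈ T) {a : G}
    (ha : a ∈ T) : conjOrbit H a ⊆ T := by
  rintro _ ⟨h, hh, rfl⟩
  exact hT h hh a ha

theorem conj_mem_sUnion_of_subset_range_conjOrbit {𝒜 : Set (Set G)}
    (h𝒜 : 𝒜 ⊆ range (conjOrbit H)) {h : G} (hh : h ∈ H) {b : G} (hb : b ∈ ⋃₀ 𝒜) :
    h * b * h⁻¹ ∈ ⋃₀ 𝒜 := by
  obtain ⟨_, hO, hbO⟩ := hb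
  obtain ⟨a, rfl⟩ := h𝒜 hO
  refine ⟨_, hO, ?_⟩
  rw [← conjOrbit_eq_of_mem hbO]
  exact ⟨h, hh, rfl⟩

theorem sUnion_image_conjOrbit_of_invariant {T : Set G}
    (hT : ∀ h ∈ H, ∀ b ∈ T, h * b * h⁻¹ ∈ T) :
    ⋃₀ (conjOrbit H '' T) = T :=
  subset_antisymm (sUnion_subset <| by rintro _ ⟨a, ha, rfl⟩; exact conjOrbit_subset hT ha)
    fun a ha => ⟨_, mem_image_of_mem _ ha, mem_conjOrbit_self a⟩

theorem isSubrackOf_sUnion {C : Set G} (hC : ∀ h ∈ H, ∀ c ∈ C, h * c * h⁻¹ ∈ C) (hCH : C ⊆ H)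
    {𝒜 : Set (Set G)} (h𝒜 : 𝒜 ⊆ conjOrbit H '' C) : IsSubrackOf (⋃₀ 𝒜) C := by
  have h𝒜C : ⋃₀ 𝒜 ⊆ C := sUnion_subset fun O hO => by
    obtain ⟨c, hc, rfl⟩ := h𝒜 hO
    exact conjOrbit_subset hC hc
  exact ⟨h𝒜C, fun a ha b hb => conj_mem_sUnion_of_subset_range_conjOrbit
    (h𝒜.trans (image_subset_range _ _)) (hCH (h𝒜C ha)) hb⟩

theorem setOf_sUnion_image_conjOrbit_subrack_eq {C : Set G}
    (hC : ∀ h ∈ H, ∀ c ∈ C, h * c * h⁻¹ ∈ C) (hCH : C ⊆ H) :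
    {T | ∃ S, IsSubrackOf S C ∧ T = ⋃₀ (conjOrbit H '' S)}
      = {T | ∃ 𝒜 ⊆ conjOrbit H '' C, T = ⋃₀ 𝒜} := by
  ext T
  constructor
  · rintro ⟨S, ⟨hSC, -⟩, rfl⟩
    exact ⟨_, image_mono hSC, rfl⟩
  · rintro ⟨𝒜, h𝒜, rfl⟩
    refine ⟨_, isSubrackOf_sUnion hC hCH h𝒜, ?_⟩
    rw [sUnion_image_conjOrbit_of_invariant fun h hh b hb =>
      conj_mem_sUnion_of_subset_range_conjOrbit (h𝒜.trans (image_subset_range _ _)) hh hb]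

end ConjOrbit

theorem image_orbit_closure_orderIso_boolean_general
    {G : Type*} [Group G] (g : G)
    (C : Set G) (hC : C = {x : G | IsConj g x})
    (H : Subgroup G) (hH : H = Subgroup.closure C)
    (Orbs : Set (Set G))
    (hOrbs : Orbs = {O : Set G | ∃ a ∈ C, O = {b : G | ∃ h ∈ H, h * a * h⁻¹ = b}})
    (bar : Set G → Set G)
    (hbar : ∀ S : Set G, bar S = {b : G | ∃ a ∈ S, ∃ h ∈ H, h * a * h⁻¹ = b}) :
    {T : Set G | ∃ S : Set G, IsSubrackOf S C ∧ T = bar S}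
        = {T : Set G | ∃ 𝒜 ⊆ Orbs, T = ⋃₀ 𝒜} ∧
      Nonempty
        ({T : Set G // ∃ S : Set G, IsSubrackOf S C ∧ T = bar S} ≃o Set Orbs) := by
  obtain rfl : Orbs = conjOrbit H '' C := by
    simp only [hOrbs, image, eq_comm, conjOrbit]
  obtain rfl : bar = fun S => ⋃₀ (conjOrbit H '' S) := by
    ext S b
    simp [hbar, conjOrbit]
  have hCH : C ⊆ H := hH ▸ Subgroup.subset_closure
  have hCconj : ∀ h ∈ H, ∀ c ∈ C, h * c * h⁻¹ ∈ C := by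
    rintro h - c hc
    rw [hC] at hc ⊢
    exact hc.trans (isConj_iff.mpr ⟨h, rfl⟩)
  have hEq := setOf_sUnion_image_conjOrbit_subrack_eq hCconj hCH
  exact ⟨hEq, ⟨(OrderIso.setCongr _ _ hEq).trans <| sUnionOrderIso
    (by rintro _ ⟨a, -, rfl⟩; exact ⟨a, mem_conjOrbit_self a⟩)
    (pairwiseDisjoint_range_conjOrbit.subset (image_subset_range _ _))⟩⟩

/-- The image of the closure operator S ↦ S̄ (union of H-orbits meeting S) on
the poset of subracks of a conjugacy class C in a finite p-group consists
exactly of the unions of H-orbits, and is order-isomorphic to the Boolean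
lattice of subsets of the set of H-orbits of C, where H = ⟨C⟩. -/
theorem image_orbit_closure_orderIso_boolean {p : ℕ} [Fact p.Prime]
    {G : Type*} [Group G] [Finite G] (hp : IsPGroup p G) (g : G)
    (C : Set G) (hC : C = {x : G | IsConj g x}) (hC1 : 1 < Nat.card C)
    (H : Subgroup G) (hH : H = Subgroup.closure C)
    (Orbs : Set (Set G))
    (hOrbs : Orbs = {O : Set G | ∃ a ∈ C, O = {b : G | ∃ h ∈ H, h * a * h⁻¹ = b}})
    (bar : Set G → Set G)
    (hbar : ∀ S : Set G, bar S = {b : G | ∃ a ∈ S, ∃ h ∈ H, h * a * h⁻¹ = b}) :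
    {T : Set G | ∃ S : Set G, IsSubrackOf S C ∧ T = bar S}
        = {T : Set G | ∃ 𝒜 ⊆ Orbs, T = ⋃₀ 𝒜} ∧
      Nonempty
        ({T : Set G // ∃ S : Set G, IsSubrackOf S C ∧ T = bar S} ≃o Set Orbs) :=
  image_orbit_closure_orderIso_boolean_general g C hC H hH Orbs hOrbs bar hbar
end
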